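/- arXiv:2206.04455 — 2 statements merged into one kernel-verified Lean document; each statement's English description precedes it below -/
import Mathlib

section
/- Let Ω ⊂ ℂⁿ be a bounded domain with C² boundary and let ρ be a C² defining function for Ω. Then there exist a constant A > 0, a neighborhood U of ∂Ω, and a C² defining function ϱ for Ω such that ϱ is subharmonic on Ω (Δϱ ≥ 0 on Ω) and ϱ = ρ + Aρ² on U. -/
open MeasureTheory Filter Complex Set Bornology ENNReal

noncomputable section

/-- ℂⁿ with the Euclidean metric. -/
abbrev Cn (n : ℕ) : Type := EuclideanSpace ℂ (Fin n)


instance {n : ℕ} : MeasurableSpace (Cn n) := borel _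
instance {n : ℕ} : BorelSpace (Cn n) := ⟨rfl⟩
instance {n : ℕ} : MeasureSpace (Cn n) :=
  letI : InnerProductSpace ℝ (Cn n) := InnerProductSpace.complexToReal
  measureSpaceOfInnerProductSpace

/-- The `j`-th standard basis vector of ℂⁿ. -/
def sdir {n : ℕ} (j : Fin n) : Cn n := EuclideanSpace.single j 1

/-- Wirtinger derivative `∂f/∂z_j`. -/
def wder {n : ℕ} (j : Fin n) (f : Cn n → ℂ) (z : Cn n) : ℂ :=
  (fderiv ℝ f z (sdir j) - Complex.I * fderiv ℝ f z (Complex.I • sdir j)) / 2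

/-- Conjugate Wirtinger derivative `∂f/∂z̄_j`. -/
def wbar {n : ℕ} (j : Fin n) (f : Cn n → ℂ) (z : Cn n) : ℂ :=
  (fderiv ℝ f z (sdir j) + Complex.I * fderiv ℝ f z (Complex.I • sdir j)) / 2

/-- Complex Hessian `∂²f/∂z_j∂z̄_k`. -/
def hessC {n : ℕ} (j k : Fin n) (f : Cn n → ℂ) (z : Cn n) : ℂ :=
  wder j (fun w => wbar k f w) z

/-- Levi form `Σ_{j,k} (∂²φ/∂z_j∂z̄_k) ξ_j ξ̄_k` of a real-valued function. -/
def levi {n : ℕ} (φ : Cn n → ℝ) (z : Cn n) (ξ : Fin n → ℂ) : ℝ :=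
  (∑ j, ∑ k, hessC j k (fun w => (φ w : ℂ)) z * ξ j * (starRingEnd ℂ) (ξ k)).re

/-- Euclidean Laplacian on ℂⁿ ≅ ℝ^{2n}. -/
def lap {n : ℕ} (φ : Cn n → ℝ) (z : Cn n) : ℝ :=
  ∑ j, (fderiv ℝ (fun w => fderiv ℝ φ w (sdir j)) z (sdir j)
    + fderiv ℝ (fun w => fderiv ℝ φ w (Complex.I • sdir j)) z (Complex.I • sdir j))

/-- Squared norm of the real gradient `|∇φ|²`. -/
def gradSq {n : ℕ} (φ : Cn n → ℝ) (z : Cn n) : ℝ :=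
  ∑ j, ((fderiv ℝ φ z (sdir j)) ^ 2 + (fderiv ℝ φ z (Complex.I • sdir j)) ^ 2)

/-- `ρ` is a `C²` defining function for the bounded open set `Ω ⊂ ℂⁿ`:
`ρ` is real-valued and `C²` on a neighborhood `U` of the closure of `Ω`,
`Ω = {ρ < 0}`, and `∇ρ ≠ 0` on `∂Ω`. -/
structure IsDefining {n : ℕ} (Ω : Set (Cn n)) (ρ : Cn n → ℝ) : Prop where
  isOpen : IsOpen Ω
  bounded : IsBounded Ω
  exU : ∃ U : Set (Cn n), IsOpen U ∧ closure Ω ⊆ U ∧ ContDiffOn ℝ 2 ρ U ∧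
    Ω = {z | z ∈ U ∧ ρ z < 0}
  grad_ne : ∀ z ∈ frontier Ω, fderiv ℝ ρ z ≠ 0

/-- Squared Hardy norm `‖f‖²_{H²(Ω)} = limsup_{ε→0⁺} ∫_{∂Ω_ε} |f|² dσ_ε`,
where `∂Ω_ε` carries the `(2n-1)`-dimensional Hausdorff measure. -/
def hardySq {n : ℕ} (Ω : Set (Cn n)) (ρ : Cn n → ℝ) (f : Cn n → ℂ) : ℝ≥0∞ :=
  Filter.limsup
    (fun ε : ℝ =>
      ∫⁻ z in frontier {w | w ∈ Ω ∧ ρ w < -ε}, ENNReal.ofReal (‖f z‖ ^ 2)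
        ∂ μH[2 * (n : ℝ) - 1])
    (nhdsWithin 0 (Set.Ioi 0))

/-- `f` belongs to the Hardy space `H²(Ω)`. -/
def MemHardy {n : ℕ} (Ω : Set (Cn n)) (ρ : Cn n → ℝ) (f : Cn n → ℂ) : Prop :=
  DifferentiableOn ℂ f Ω ∧ hardySq Ω ρ f < ⊤

/-- The subdomain `Ω_ε = {z ∈ Ω : ρ(z) < -ε}`. -/
def subdom {n : ℕ} (Ω : Set (Cn n)) (ρ : Cn n → ℝ) (ε : ℝ) : Set (Cn n) :=
  {w | w ∈ Ω ∧ ρ w < -ε}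

/-!
Compose `ρ` with `λ(t) = μ(2At)/(2A)`, where `μ` is a fixed convex nondecreasing `C²` profile with
`μ(s) = s + s²/2` for `s ≥ -1/2`, `μ' = 0` for `s ≤ -3/2` and `μ' ≤ μ''` for `s ≤ 0` (`μ''` ramps
linearly from `0` to `1` on `[-3/2, -1/2]`). Then `λ(ρ) = ρ + Aρ²` near `∂Ω` and
`Δ(λ ∘ ρ) = 2A μ''(2Aρ) |∇ρ|² + μ'(2Aρ) Δρ`, which is nonnegative where `μ'(2Aρ) = 0`. Elsewhere
`ρ ≥ -3/(4A)`. Since `∇ρ ≠ 0` on `closure Ω ∩ {ρ = 0} = ∂Ω`, compactness gives `δ > 0` with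
`|∇ρ|² ≥ δ` on `closure Ω ∩ {ρ ≥ -δ}`, and `Δρ ≥ -M` on `closure Ω`. For `A = (M + 1)/δ` the
Laplacian is then at least `μ''(2Aρ) (2Aδ - M) ≥ 0`.
-/

open Topology

def profileDeriv2 (s : ℝ) : ℝ := min 1 (max 0 (s + 3 / 2))

def profileDeriv (s : ℝ) : ℝ := ∫ u in (-3 / 2)..s, profileDeriv2 u

def profile (s : ℝ) : ℝ := ∫ u in (0 : ℝ)..s, profileDeriv u

theorem continuous_profileDeriv2 : Continuous profileDeriv2 := by
  unfold profileDeriv2; fun_prop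

theorem profileDeriv2_nonneg (s : ℝ) : 0 ≤ profileDeriv2 s :=
  le_min zero_le_one (le_max_left _ _)

theorem profileDeriv2_of_le {s : ℝ} (hs : s ≤ -3 / 2) : profileDeriv2 s = 0 := by
  rw [profileDeriv2, max_eq_left (by linarith), min_eq_right zero_le_one]

theorem profileDeriv2_of_mem_Icc {s : ℝ} (hs : s ∈ Icc (-3 / 2) (-1 / 2)) :
    profileDeriv2 s = s + 3 / 2 := by
  rw [profileDeriv2, max_eq_right (by linarith [hs.1]), min_eq_right (by linarith [hs.2])]

theorem profileDeriv2_of_ge {s : ℝ} (hs : -1 / 2 ≤ s) : profileDeriv2 s = 1 := by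
  rw [profileDeriv2, max_eq_right (by linarith), min_eq_left (by linarith)]

theorem hasDerivAt_profileDeriv (s : ℝ) : HasDerivAt profileDeriv (profileDeriv2 s) s :=
  intervalIntegral.integral_hasDerivAt_right (continuous_profileDeriv2.intervalIntegrable _ _)
    (continuous_profileDeriv2.stronglyMeasurableAtFilter _ _)
    continuous_profileDeriv2.continuousAt

theorem continuous_profileDeriv : Continuous profileDeriv :=
  continuous_iff_continuousAt.2 fun s => (hasDerivAt_profileDeriv s).continuousAt

theorem hasDerivAt_profile (s : ℝ) : HasDerivAt profile (profileDeriv s) s :=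
  intervalIntegral.integral_hasDerivAt_right (continuous_profileDeriv.intervalIntegrable _ _)
    (continuous_profileDeriv.stronglyMeasurableAtFilter _ _) continuous_profileDeriv.continuousAt

theorem contDiff_profile : ContDiff ℝ 2 profile := by
  have hd : deriv profile = profileDeriv := funext fun s => (hasDerivAt_profile s).deriv
  have hd2 : deriv profileDeriv = profileDeriv2 :=
    funext fun s => (hasDerivAt_profileDeriv s).deriv
  rw [show (2 : WithTop ℕ∞) = 1 + 1 from rfl, contDiff_succ_iff_deriv, hd,
    contDiff_one_iff_deriv, hd2]
  exact ⟨fun s => (hasDerivAt_profile s).differentiableAt, by simp,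
    fun s => (hasDerivAt_profileDeriv s).differentiableAt, continuous_profileDeriv2⟩

theorem profileDeriv_of_le {s : ℝ} (hs : s ≤ -3 / 2) : profileDeriv s = 0 := by
  rw [profileDeriv, intervalIntegral.integral_congr (g := fun _ => (0 : ℝ)),
    intervalIntegral.integral_zero]
  intro u hu
  rw [uIcc_of_ge hs] at hu
  exact profileDeriv2_of_le hu.2

theorem profileDeriv_of_mem_Icc {s : ℝ} (hs : s ∈ Icc (-3 / 2) (-1 / 2)) :
    profileDeriv s = (s + 3 / 2) ^ 2 / 2 := by
  rw [profileDeriv, intervalIntegral.integral_congr (g := fun u => u + 3 / 2)]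
  · simp only [intervalIntegral.integral_comp_add_right (fun u => u), integral_id]
    ring
  intro u hu
  rw [uIcc_of_le hs.1] at hu
  exact profileDeriv2_of_mem_Icc ⟨hu.1, hu.2.trans hs.2⟩

theorem profileDeriv_of_ge {s : ℝ} (hs : -1 / 2 ≤ s) : profileDeriv s = 1 + s := by
  have hsplit := intervalIntegral.integral_add_adjacent_intervals (μ := volume)
    (continuous_profileDeriv2.intervalIntegrable (-3 / 2) (-1 / 2))
    (continuous_profileDeriv2.intervalIntegrable (-1 / 2) s)
  have hhalf : profileDeriv (-1 / 2) = 1 / 2 := by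
    rw [profileDeriv_of_mem_Icc ⟨by norm_num, le_rfl⟩]; norm_num
  have htail : ∫ u in (-1 / 2)..s, profileDeriv2 u = s + 1 / 2 := by
    rw [intervalIntegral.integral_congr (g := fun _ => (1 : ℝ))]
    · simp only [intervalIntegral.integral_const, smul_eq_mul, mul_one]; ring
    intro u hu
    rw [uIcc_of_le hs] at hu
    exact profileDeriv2_of_ge hu.1
  rw [profileDeriv, ← hsplit, ← profileDeriv, hhalf, htail]
  ring

theorem profile_of_ge {s : ℝ} (hs : -1 / 2 ≤ s) : profile s = s + s ^ 2 / 2 := by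
  rw [profile, intervalIntegral.integral_congr (g := fun u => 1 + u)]
  · simp only [intervalIntegral.integral_comp_add_left (fun u => u), integral_id]
    ring
  intro u hu
  exact profileDeriv_of_ge ((le_min (by norm_num) hs).trans hu.1)

theorem profileDeriv_nonneg (s : ℝ) : 0 ≤ profileDeriv s := by
  rcases le_total s (-3 / 2) with hs | hs
  · rw [profileDeriv_of_le hs]
  rcases le_total s (-1 / 2) with hs' | hs'
  · rw [profileDeriv_of_mem_Icc ⟨hs, hs'⟩]; positivity
  · rw [profileDeriv_of_ge hs']; linarith

theorem profileDeriv_le_profileDeriv2 {s : ℝ} (hs : s ≤ 0) :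
    profileDeriv s ≤ profileDeriv2 s := by
  rcases le_total s (-3 / 2) with hs₁ | hs₁
  · rw [profileDeriv_of_le hs₁]; exact profileDeriv2_nonneg s
  rcases le_total s (-1 / 2) with hs₂ | hs₂
  · rw [profileDeriv_of_mem_Icc ⟨hs₁, hs₂⟩, profileDeriv2_of_mem_Icc ⟨hs₁, hs₂⟩]
    nlinarith
  · rw [profileDeriv_of_ge hs₂, profileDeriv2_of_ge hs₂]; linarith

theorem monotone_profile : Monotone profile :=
  monotone_of_deriv_nonneg (fun s => (hasDerivAt_profile s).differentiableAt)
    fun s => (hasDerivAt_profile s).deriv ▸ profileDeriv_nonneg s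

theorem profile_neg_iff {s : ℝ} : profile s < 0 ↔ s < 0 := by
  refine ⟨fun h => not_le.1 fun hs => h.not_ge ?_, fun hs => ?_⟩
  · simpa [profile_of_ge (by norm_num : (-1 / 2 : ℝ) ≤ 0)] using monotone_profile hs
  rcases le_total s (-1 / 2) with hs' | hs'
  · calc profile s ≤ profile (-1 / 2) := monotone_profile hs'
      _ < 0 := by rw [profile_of_ge le_rfl]; norm_num
  · rw [profile_of_ge hs']; nlinarith

theorem profileDeriv2_mul_add_profileDeriv_mul_nonneg {s K L M : ℝ} (hs : s ≤ 0) (hK : 0 ≤ K)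
    (hMK : -3 / 2 < s → M ≤ K) (hL : -M ≤ L) :
    0 ≤ profileDeriv2 s * K + profileDeriv s * L := by
  rcases le_or_gt s (-3 / 2) with hs' | hs'
  · rw [profileDeriv_of_le hs', zero_mul, add_zero]
    exact mul_nonneg (profileDeriv2_nonneg s) hK
  have h₁ := profileDeriv_nonneg s
  have h₂ := profileDeriv_le_profileDeriv2 hs
  have h₃ := hMK hs'
  rcases le_total 0 M with hM | hM
  · nlinarith [mul_le_mul_of_nonneg_left h₂ hM]
  · nlinarith

theorem IsCompact.exists_pos_le_of_neg_or_pos {X : Type*} [TopologicalSpace X] {K : Set X}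
    (hK : IsCompact K) {f g : X → ℝ} (hf : ContinuousOn f K) (hg : ContinuousOn g K)
    (hfg : ∀ z ∈ K, f z < 0 ∨ 0 < g z) : ∃ δ > 0, ∀ z ∈ K, -δ ≤ f z → δ ≤ g z := by
  obtain ⟨c, hc, hcK⟩ := hK.exists_forall_le' (hg.sup hf.neg) fun z hz =>
    (hfg z hz).elim (fun h => lt_sup_of_lt_right (neg_pos.2 h)) lt_sup_of_lt_left
  refine ⟨c / 2, half_pos hc, fun z hz hfz => ?_⟩
  rcases le_sup_iff.1 (hcK z hz) with h | h
  · linarith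
  · linarith [show (-f) z = -f z from rfl]

theorem fderiv_fderiv_comp_apply {E : Type*} [NormedAddCommGroup E] [NormedSpace ℝ E]
    {ρ : E → ℝ} {z : E} (hρ : ContDiffAt ℝ 2 ρ z) {f f' f'' : ℝ → ℝ}
    (hf : ∀ t, HasDerivAt f (f' t) t) (hf' : ∀ t, HasDerivAt f' (f'' t) t) (v : E) :
    fderiv ℝ (fun w => fderiv ℝ (fun y => f (ρ y)) w v) z v
      = f'' (ρ z) * fderiv ℝ ρ z v ^ 2 + f' (ρ z) * fderiv ℝ (fun w => fderiv ℝ ρ w v) z v := by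
  have hρw : ∀ᶠ w in 𝓝 z, DifferentiableAt ℝ ρ w :=
    (hρ.eventually (by simp)).mono fun w hw => hw.differentiableAt (by norm_num)
  have hfirst : (fun w => fderiv ℝ (fun y => f (ρ y)) w v)
      =ᶠ[𝓝 z] fun w => f' (ρ w) * fderiv ℝ ρ w v :=
    hρw.mono fun w hw => by
      change fderiv ℝ (f ∘ ρ) w v = _
      rw [((hf (ρ w)).comp_hasFDerivAt w hw.hasFDerivAt).fderiv]; rfl
  have hD : DifferentiableAt ℝ (fderiv ℝ ρ) z :=
    (hρ.fderiv_right (m := 1) le_rfl).differentiableAt one_ne_zero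
  have hB : HasFDerivAt (fun w => fderiv ℝ ρ w v)
      ((ContinuousLinearMap.apply ℝ ℝ v).comp (fderiv ℝ (fderiv ℝ ρ) z)) z :=
    (ContinuousLinearMap.apply ℝ ℝ v).hasFDerivAt.comp z hD.hasFDerivAt
  have hA : HasFDerivAt (fun w => f' (ρ w)) (f'' (ρ z) • fderiv ℝ ρ z) z :=
    (hf' (ρ z)).comp_hasFDerivAt z (hρ.differentiableAt (by norm_num)).hasFDerivAt
  have hAB : HasFDerivAt (fun w => f' (ρ w) * fderiv ℝ ρ w v) _ z := hA.mul hB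
  rw [hfirst.fderiv_eq, hAB.fderiv, hB.fderiv]
  simp only [add_apply, smul_apply, ContinuousLinearMap.coe_comp, Function.comp_apply,
    ContinuousLinearMap.apply_apply, smul_eq_mul]
  ring

theorem fderiv_fderiv_apply_eq {E : Type*} [NormedAddCommGroup E] [NormedSpace ℝ E]
    {ρ : E → ℝ} {z : E} (hρ : DifferentiableAt ℝ (fderiv ℝ ρ) z) (v : E) :
    fderiv ℝ (fun w => fderiv ℝ ρ w v) z v = fderiv ℝ (fderiv ℝ ρ) z v v := by
  rw [fderiv_clm_apply hρ (differentiableAt_const v)]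
  simp

section EuclideanComplex

variable {n : ℕ}

theorem lap_comp {ρ : Cn n → ℝ} {z : Cn n} (hρ : ContDiffAt ℝ 2 ρ z) {f f' f'' : ℝ → ℝ}
    (hf : ∀ t, HasDerivAt f (f' t) t) (hf' : ∀ t, HasDerivAt f' (f'' t) t) :
    lap (fun w => f (ρ w)) z = f'' (ρ z) * gradSq ρ z + f' (ρ z) * lap ρ z := by
  simp only [lap, gradSq, fderiv_fderiv_comp_apply hρ hf hf', Finset.mul_sum,
    ← Finset.sum_add_distrib]
  exact Finset.sum_congr rfl fun j _ => by ring

theorem ContDiffOn.continuousOn_gradSq {ρ : Cn n → ℝ} {U : Set (Cn n)} (hρ : ContDiffOn ℝ 2 ρ U)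
    (hU : IsOpen U) : ContinuousOn (gradSq ρ) U := by
  have hD := hρ.continuousOn_fderiv_of_isOpen hU (by norm_num)
  exact continuousOn_finsetSum _ fun j _ =>
    ((hD.clm_apply continuousOn_const).pow 2).add ((hD.clm_apply continuousOn_const).pow 2)

theorem ContDiffOn.continuousOn_lap {ρ : Cn n → ℝ} {U : Set (Cn n)} (hρ : ContDiffOn ℝ 2 ρ U)
    (hU : IsOpen U) : ContinuousOn (lap ρ) U := by
  have hD : ContDiffOn ℝ 1 (fderiv ℝ ρ) U := hρ.fderiv_of_isOpen hU (by norm_num)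
  have hD2 := hD.continuousOn_fderiv_of_isOpen hU le_rfl
  have hsecond (v : Cn n) : ContinuousOn (fun z => fderiv ℝ (fun w => fderiv ℝ ρ w v) z v) U :=
    ((hD2.clm_apply continuousOn_const).clm_apply continuousOn_const).congr fun z hz =>
      fderiv_fderiv_apply_eq ((hD.differentiableOn one_ne_zero).differentiableAt
        (hU.mem_nhds hz)) v
  exact continuousOn_finsetSum _ fun j _ => (hsecond _).add (hsecond _)

theorem ContinuousLinearMap.eq_zero_of_sdir {L : Cn n →L[ℝ] ℝ} (h₁ : ∀ j, L (sdir j) = 0)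
    (h₂ : ∀ j, L (Complex.I • sdir j) = 0) : L = 0 := by
  let b := Complex.basisOneI.smulTower (EuclideanSpace.basisFun (Fin n) ℂ).toBasis
  refine ContinuousLinearMap.coe_injective (b.ext fun ij => ?_)
  obtain ⟨i, j⟩ := ij
  fin_cases i
  · simpa [b, sdir] using h₁ j
  · simpa [b, sdir] using h₂ j

theorem gradSq_nonneg (φ : Cn n → ℝ) (z : Cn n) : 0 ≤ gradSq φ z :=
  Finset.sum_nonneg fun _ _ => by positivity

theorem gradSq_pos {φ : Cn n → ℝ} {z : Cn n} (h : fderiv ℝ φ z ≠ 0) : 0 < gradSq φ z := by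
  refine lt_of_le_of_ne (gradSq_nonneg φ z) fun h0 => h ?_
  have hj := fun j => (Finset.sum_eq_zero_iff_of_nonneg (fun j _ => by positivity)).1 h0.symm j
    (Finset.mem_univ j)
  exact ContinuousLinearMap.eq_zero_of_sdir
    (fun j => by nlinarith [hj j, sq_nonneg (fderiv ℝ φ z (Complex.I • sdir j))])
    (fun j => by nlinarith [hj j, sq_nonneg (fderiv ℝ φ z (sdir j))])

namespace IsDefining

variable {Ω : Set (Cn n)} {ρ : Cn n → ℝ}

theorem eq_zero_of_mem_frontier (hρ : IsDefining Ω ρ) {z : Cn n} (hz : z ∈ frontier Ω) :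
    ρ z = 0 := by
  obtain ⟨U, hUo, hΩU, hρU, hΩ⟩ := hρ.exU
  have hzU : z ∈ U := hΩU (frontier_subset_closure hz)
  refine le_antisymm ?_ (not_lt.1 fun h => ?_)
  · refine ContinuousWithinAt.closure_le (frontier_subset_closure hz)
      (hρU.continuousOn.continuousAt (hUo.mem_nhds hzU)).continuousWithinAt
      continuousWithinAt_const fun w hw => ?_
    rw [hΩ] at hw
    exact hw.2.le
  · rw [hρ.isOpen.frontier_eq, hΩ] at hz
    exact hz.2 ⟨hzU, h⟩

theorem neg_or_gradSq_pos (hρ : IsDefining Ω ρ) {z : Cn n} (hz : z ∈ closure Ω) :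
    ρ z < 0 ∨ 0 < gradSq ρ z := by
  obtain ⟨U, -, -, -, hΩ⟩ := hρ.exU
  by_cases hzΩ : z ∈ Ω
  · rw [hΩ] at hzΩ
    exact Or.inl hzΩ.2
  · refine Or.inr (gradSq_pos (hρ.grad_ne z ?_))
    rw [hρ.isOpen.frontier_eq]
    exact ⟨hz, hzΩ⟩

theorem comp (hρ : IsDefining Ω ρ) {f : ℝ → ℝ} (hf : ContDiff ℝ 2 f)
    (hneg : ∀ t, f t < 0 ↔ t < 0) {d : ℝ} (hd : HasDerivAt f d 0) (hd₀ : d ≠ 0) :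
    IsDefining Ω (fun z => f (ρ z)) := by
  obtain ⟨U, hUo, hΩU, hρU, hΩ⟩ := hρ.exU
  refine ⟨hρ.isOpen, hρ.bounded, ⟨U, hUo, hΩU, hf.comp_contDiffOn hρU, ?_⟩, fun z hz => ?_⟩
  · simp only [hneg]
    exact hΩ
  · have hzU : z ∈ U := hΩU (frontier_subset_closure hz)
    have hρz : HasFDerivAt ρ (fderiv ℝ ρ z) z :=
      ((hρU.contDiffAt (hUo.mem_nhds hzU)).differentiableAt (by norm_num)).hasFDerivAt
    rw [← hρ.eq_zero_of_mem_frontier hz] at hd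
    change fderiv ℝ (f ∘ ρ) z ≠ 0
    rw [(hd.comp_hasFDerivAt z hρz).fderiv]
    exact smul_ne_zero hd₀ (hρ.grad_ne z hz)

end IsDefining

def quadProfile (A t : ℝ) : ℝ := profile (2 * A * t) / (2 * A)

section QuadProfile

variable {A : ℝ}

theorem hasDerivAt_quadProfile (hA : A ≠ 0) (t : ℝ) :
    HasDerivAt (quadProfile A) (profileDeriv (2 * A * t)) t := by
  have h := ((hasDerivAt_profile (2 * A * t)).comp t
    ((hasDerivAt_id t).const_mul (2 * A))).div_const (2 * A)
  rwa [mul_one, mul_div_cancel_right₀ _ (mul_ne_zero two_ne_zero hA)] at h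

theorem hasDerivAt_quadProfile_zero (hA : A ≠ 0) : HasDerivAt (quadProfile A) 1 0 := by
  have h := hasDerivAt_quadProfile hA 0
  rwa [mul_zero, profileDeriv_of_ge (by norm_num), add_zero] at h

theorem hasDerivAt_profileDeriv_const_mul (A t : ℝ) :
    HasDerivAt (fun t => profileDeriv (2 * A * t)) (profileDeriv2 (2 * A * t) * (2 * A)) t := by
  have h := (hasDerivAt_profileDeriv (2 * A * t)).comp t ((hasDerivAt_id' t).const_mul (2 * A))
  rwa [mul_one] at h

theorem contDiff_quadProfile (A : ℝ) : ContDiff ℝ 2 (quadProfile A) :=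
  (contDiff_profile.comp (contDiff_const.mul contDiff_id)).div_const _

theorem quadProfile_neg_iff (hA : 0 < A) {t : ℝ} : quadProfile A t < 0 ↔ t < 0 := by
  rw [quadProfile, div_neg_iff, profile_neg_iff]
  constructor
  · rintro (⟨-, h⟩ | ⟨h, -⟩) <;> nlinarith
  · intro ht; exact Or.inr ⟨by nlinarith, by positivity⟩

theorem quadProfile_of_ge (hA : 0 < A) {t : ℝ} (ht : -(1 / (4 * A)) ≤ t) :
    quadProfile A t = t + A * t ^ 2 := by
  have h : -1 / 2 ≤ 2 * A * t := by
    have := mul_le_mul_of_nonneg_left ht (by positivity : (0 : ℝ) ≤ 2 * A)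
    field_simp at this ⊢; linarith
  rw [quadProfile, profile_of_ge h]
  field_simp

theorem lap_quadProfile_comp_nonneg (hA : 0 < A) {ρ : Cn n → ℝ} {z : Cn n}
    (hρ : ContDiffAt ℝ 2 ρ z) (hz : ρ z ≤ 0) {M : ℝ}
    (hgrad : -3 / 2 < 2 * A * ρ z → M ≤ 2 * A * gradSq ρ z) (hlap : -M ≤ lap ρ z) :
    0 ≤ lap (fun w => quadProfile A (ρ w)) z := by
  rw [lap_comp hρ (hasDerivAt_quadProfile hA.ne') (hasDerivAt_profileDeriv_const_mul A),
    mul_assoc]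
  exact profileDeriv2_mul_add_profileDeriv_mul_nonneg (by nlinarith)
    (mul_nonneg (by positivity) (gradSq_nonneg ρ z)) hgrad hlap

end QuadProfile

end EuclideanComplex

theorem exists_subharmonic_defining_general {n : ℕ} (Ω : Set (Cn n))
    (ρ : Cn n → ℝ) (hρ : IsDefining Ω ρ) :
    ∃ A : ℝ, 0 < A ∧
      ∃ U : Set (Cn n), IsOpen U ∧ frontier Ω ⊆ U ∧
        ∃ ϱ : Cn n → ℝ, IsDefining Ω ϱ ∧ (∀ z ∈ Ω, 0 ≤ lap ϱ z) ∧
          ∀ z ∈ U, ϱ z = ρ z + A * (ρ z) ^ 2 := by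
  obtain ⟨U, hUo, hΩU, hρU, hΩ⟩ := hρ.exU
  have hK : IsCompact (closure Ω) := hρ.bounded.isCompact_closure
  obtain ⟨δ, hδ, hgrad⟩ := hK.exists_pos_le_of_neg_or_pos (hρU.continuousOn.mono hΩU)
    ((hρU.continuousOn_gradSq hUo).mono hΩU) fun z => hρ.neg_or_gradSq_pos
  obtain ⟨m, hm⟩ := hK.bddBelow_image ((hρU.continuousOn_lap hUo).mono hΩU)
  set A := (|m| + 1) / δ
  have hA : 0 < A := by positivity
  have hAδ : A * δ = |m| + 1 := div_mul_cancel₀ _ hδ.ne'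
  refine ⟨A, hA, U ∩ ρ ⁻¹' Ioi (-(1 / (4 * A))),
    hρU.continuousOn.isOpen_inter_preimage hUo isOpen_Ioi,
    fun z hz => ⟨hΩU (frontier_subset_closure hz), ?_⟩, fun z => quadProfile A (ρ z),
    hρ.comp (contDiff_quadProfile A) (fun _ => quadProfile_neg_iff hA)
      (hasDerivAt_quadProfile_zero hA.ne') one_ne_zero,
    fun z hz => ?_, fun z hz => quadProfile_of_ge hA hz.2.le⟩
  · simp only [mem_preimage, mem_Ioi, hρ.eq_zero_of_mem_frontier hz]
    exact neg_lt_zero.2 (by positivity)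
  · have hzK : z ∈ closure Ω := subset_closure hz
    have hρz : ρ z < 0 := by rw [hΩ] at hz; exact hz.2
    refine lap_quadProfile_comp_nonneg hA (hρU.contDiffAt (hUo.mem_nhds (hΩU hzK))) hρz.le
      (M := |m|) (fun hs => ?_) ((neg_abs_le m).trans (hm (mem_image_of_mem _ hzK)))
    have hδG := hgrad z hzK (not_lt.1 fun h => by
      nlinarith [abs_nonneg m, mul_lt_mul_of_pos_left h (by positivity : (0 : ℝ) < 2 * A)])
    nlinarith [mul_le_mul_of_nonneg_left hδG (by positivity : (0 : ℝ) ≤ 2 * A)]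

/-- **Existence of a subharmonic defining function** (Lemma 2.1).
If `Ω ⊂ ℂⁿ` is a bounded domain with `C²` boundary and `ρ` is a `C²` defining function,
then there are `A > 0`, a neighborhood `U` of `∂Ω`, and a `C²` defining function `ϱ`
for `Ω` which is subharmonic on `Ω` and satisfies `ϱ = ρ + Aρ²` on `U`. -/
theorem exists_subharmonic_defining {n : ℕ} (Ω : Set (Cn n)) (hconn : IsConnected Ω)
    (ρ : Cn n → ℝ) (hρ : IsDefining Ω ρ) :
    ∃ A : ℝ, 0 < A ∧
      ∃ U : Set (Cn n), IsOpen U ∧ frontier Ω ⊆ U ∧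
        ∃ ϱ : Cn n → ℝ, IsDefining Ω ϱ ∧ (∀ z ∈ Ω, 0 ≤ lap ϱ z) ∧
          ∀ z ∈ U, ϱ z = ρ z + A * (ρ z) ^ 2 :=
  exists_subharmonic_defining_general Ω ρ hρ
end
end

section
/- Let g₁, g₂ be holomorphic functions on an open set U ⊂ ℂⁿ with |g(z)|² := |g₁(z)|² + |g₂(z)|² > 0 for all z ∈ U. Then for all z ∈ U and all 1 ≤ j, k ≤ n: ∂² log|g|²/∂z_j∂z̄_k = |g|^{−4} (g₂ ∂g₁/∂z_j − g₁ ∂g₂/∂z_j) · conj(g₂ ∂g₁/∂z_k − g₁ ∂g₂/∂z_k). -/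
open MeasureTheory Filter Complex Set Bornology ENNReal

noncomputable section

/-! Write `N = g₁ ḡ₁ + g₂ ḡ₂ = |g|²` and `∂ = ∂/∂z`. Because `g₁, g₂` are holomorphic,
`∂̄_k log N = N⁻¹ (g₁ conj (∂_k g₁) + g₂ conj (∂_k g₂))`, and the quotient rule gives
`∂_j ∂̄_k log N = N⁻² (N A - B C)` with `A = ∂_j g₁ conj (∂_k g₁) + ∂_j g₂ conj (∂_k g₂)`,
`B = g₁ conj (∂_k g₁) + g₂ conj (∂_k g₂)` and `C = ḡ₁ ∂_j g₁ + ḡ₂ ∂_j g₂`. By Lagrange's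
identity `N A - B C = (g₂ ∂_j g₁ - g₁ ∂_j g₂) conj (g₂ ∂_k g₁ - g₁ ∂_k g₂)`.

The second differentiation needs `∂_k gᵢ` to be holomorphic again. On each complex line the
Cauchy integral formula writes `∂_v g (x)` as a circle integral of `g (x + t v)`, which can be
differentiated in `x` under the integral sign, the Cauchy estimate providing the dominating
bound. -/

open Metric Topology ComplexConjugate

section Holomorphic

variable {E F : Type*} [NormedAddCommGroup E] [NormedSpace ℂ E]
  [NormedAddCommGroup F] [NormedSpace ℂ F] [CompleteSpace F]

theorem fderiv_apply_eq_circleIntegral {g : E → F} {x v : E} {r : ℝ} (hr : 0 < r)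
    (hg : ∀ t ∈ closedBall (0 : ℂ) r, DifferentiableAt ℂ g (x + t • v)) :
    fderiv ℂ g x v = (2 * Real.pi * I)⁻¹ • ∮ t in C(0, r), (1 / t ^ 2) • g (x + t • v) := by
  have hline : ∀ t : ℂ, HasDerivAt (fun s : ℂ => x + s • v) v t := fun t => by
    simpa using ((hasDerivAt_id t).smul_const v).const_add x
  have hslice : DifferentiableOn ℂ (fun t : ℂ => g (x + t • v)) (closedBall 0 r) := fun t ht =>
    ((hg t ht).comp t (hline t).differentiableAt).differentiableWithinAt
  have hderiv : HasDerivAt (fun t : ℂ => g (x + t • v)) (fderiv ℂ g x v) 0 := by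
    have := (hg 0 (mem_closedBall_self hr.le)).hasFDerivAt.comp_hasDerivAt 0 (hline 0)
    simpa [Function.comp_def] using this
  have hcauchy := hslice.deriv_eq_smul_circleIntegral hr
  simp only [sub_zero] at hcauchy
  rw [hcauchy, hderiv.deriv, smul_smul, inv_mul_cancel₀ two_pi_I_ne_zero, one_smul]

theorem DifferentiableOn.differentiableAt_intervalIntegral_smul_comp_add
    [FiniteDimensional ℂ E] [SecondCountableTopology F]
    {g : E → F} {U : Set E} (hU : IsOpen U) (hg : DifferentiableOn ℂ g U)
    {φ : ℝ → ℂ} (hφ : Continuous φ) {γ : ℝ → E} (hγ : Continuous γ) {a b : ℝ} {z : E}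
    (hz : ∀ θ ∈ uIcc a b, z + γ θ ∈ U) :
    DifferentiableAt ℂ (fun x => ∫ θ in a..b, φ θ • g (x + γ θ)) z := by
  set K := (fun θ => z + γ θ) '' uIcc a b
  have hK : IsCompact K := isCompact_uIcc.image (continuous_const.add hγ)
  obtain ⟨δ, hδ, hKU⟩ := hK.exists_cthickening_subset_open hU (image_subset_iff.2 hz)
  obtain ⟨M, hM⟩ := hK.cthickening.exists_bound_of_continuousOn (hg.continuousOn.mono hKU)
  obtain ⟨C, hC⟩ :=
    (isCompact_uIcc (a := a) (b := b)).exists_bound_of_continuousOn hφ.continuousOn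
  have hball : ∀ x ∈ ball z (δ / 2), ∀ θ ∈ uIcc a b,
      ball (x + γ θ) (δ / 2) ⊆ cthickening δ K := by
    intro x hx θ hθ
    have hcenter : z + γ θ ∈ K := mem_image_of_mem _ hθ
    refine (ball_subset_ball' ?_).trans
      ((ball_subset_thickening hcenter δ).trans (thickening_subset_cthickening δ K))
    rw [dist_add_right]
    linarith [mem_ball.1 hx]
  have hmem : ∀ x ∈ ball z (δ / 2), ∀ θ ∈ uIcc a b, x + γ θ ∈ U :=
    fun x hx θ hθ => hKU (hball x hx θ hθ (mem_ball_self (half_pos hδ)))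
  have hdiff : ∀ x ∈ ball z (δ / 2), ∀ θ ∈ uIcc a b, DifferentiableAt ℂ g (x + γ θ) :=
    fun x hx θ hθ => hg.differentiableAt (hU.mem_nhds (hmem x hx θ hθ))
  have hcauchy : ∀ x ∈ ball z (δ / 2), ∀ θ ∈ uIcc a b,
      ‖fderiv ℂ g (x + γ θ)‖ ≤ 2 * M / (δ / 2) := by
    intro x hx θ hθ
    refine norm_fderiv_le_div_of_mapsTo_ball (hg.mono ((hball x hx θ hθ).trans hKU))
      (fun y hy => ?_) (by linarith)
    rw [mem_closedBall, dist_eq_norm]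
    linarith [norm_sub_le (g y) (g (x + γ θ)), hM _ (hball x hx θ hθ hy),
      hM _ (hball x hx θ hθ (mem_ball_self (half_pos hδ)))]
  have hcont : ∀ x ∈ ball z (δ / 2), ContinuousOn (fun θ => φ θ • g (x + γ θ)) (uIcc a b) :=
    fun x hx => hφ.continuousOn.smul (hg.continuousOn.comp (continuous_const.add hγ).continuousOn
      (hmem x hx))
  borelize E (E →L[ℂ] F)
  refine (intervalIntegral.hasFDerivAt_integral_of_dominated_of_fderiv_le
    (F' := fun x θ => φ θ • fderiv ℂ g (x + γ θ)) (bound := fun _ => C * (2 * M / (δ / 2)))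
    (ball_mem_nhds z (half_pos hδ)) ?_ ?_ ?_ ?_ intervalIntegrable_const ?_).differentiableAt
  · filter_upwards [ball_mem_nhds z (half_pos hδ)] with x hx
    exact ((hcont x hx).mono uIoc_subset_uIcc).aestronglyMeasurable measurableSet_uIoc
  · exact (hcont z (mem_ball_self (half_pos hδ))).intervalIntegrable
  · exact hφ.aestronglyMeasurable.smul
      ((measurable_fderiv ℂ g).comp (continuous_const.add hγ).measurable).aestronglyMeasurable
  · refine Filter.Eventually.of_forall fun θ hθ x hx => ?_
    rw [norm_smul]
    exact mul_le_mul (hC θ (uIoc_subset_uIcc hθ)) (hcauchy x hx θ (uIoc_subset_uIcc hθ))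
      (norm_nonneg _) ((norm_nonneg _).trans (hC θ (uIoc_subset_uIcc hθ)))
  · refine Filter.Eventually.of_forall fun θ hθ x hx => ?_
    exact ((hdiff x hx θ (uIoc_subset_uIcc hθ)).hasFDerivAt.comp x
      ((hasFDerivAt_id x).add_const (γ θ))).const_smul (φ θ)

theorem DifferentiableOn.differentiableAt_fderiv_apply [FiniteDimensional ℂ E]
    [SecondCountableTopology F] {g : E → F} {U : Set E} (hU : IsOpen U)
    (hg : DifferentiableOn ℂ g U) {z : E} (hz : z ∈ U) (v : E) :
    DifferentiableAt ℂ (fun x => fderiv ℂ g x v) z := by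
  obtain ⟨ε, hε, hεU⟩ := Metric.isOpen_iff.1 hU z hz
  set r := ε / (2 * (‖v‖ + 1))
  have hr : 0 < r := by positivity
  have hrv : r * ‖v‖ < ε / 2 := by
    rw [div_mul_eq_mul_div, div_lt_div_iff₀ (by positivity) two_pos]
    nlinarith [norm_nonneg v]
  have hmem : ∀ x ∈ ball z (ε / 2), ∀ t : ℂ, ‖t‖ ≤ r → x + t • v ∈ U := by
    intro x hx t ht
    refine hεU (mem_ball_iff_norm.2 ?_)
    calc ‖x + t • v - z‖ = ‖t • v + (x - z)‖ := by rw [add_sub_right_comm, add_comm]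
      _ ≤ ‖t‖ * ‖v‖ + ‖x - z‖ := (norm_add_le _ _).trans_eq (by rw [norm_smul])
      _ < ε / 2 + ε / 2 := add_lt_add
          ((mul_le_mul_of_nonneg_right ht (norm_nonneg v)).trans_lt hrv) (mem_ball_iff_norm.1 hx)
      _ = ε := add_halves ε
  have hrep : (fun x => fderiv ℂ g x v) =ᶠ[𝓝 z] fun x => (2 * Real.pi * I)⁻¹ •
      ∫ θ in (0)..2 * Real.pi, (I * (circleMap 0 r θ)⁻¹) • g (x + circleMap 0 r θ • v) := by
    filter_upwards [ball_mem_nhds z (half_pos hε)] with x hx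
    rw [fderiv_apply_eq_circleIntegral hr fun t ht => hg.differentiableAt
      (hU.mem_nhds (hmem x hx t (mem_closedBall_zero_iff.1 ht))), circleIntegral]
    congr 1
    refine intervalIntegral.integral_congr fun θ _ => ?_
    have := circleMap_ne_center (c := 0) (θ := θ) hr.ne'
    simp only [deriv_circleMap, smul_smul]
    congr 1
    field_simp
  have hcircle : ∀ θ, z + circleMap 0 r θ • v ∈ U := fun θ =>
    hmem z (mem_ball_self (half_pos hε)) _ (by rw [norm_circleMap_zero, abs_of_pos hr])
  refine ((hg.differentiableAt_intervalIntegral_smul_comp_add hU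
    (continuous_const.mul ((continuous_circleMap 0 r).inv₀ fun θ => circleMap_ne_center hr.ne'))
    ((continuous_circleMap 0 r).smul continuous_const) fun θ _ => hcircle θ).const_smul
      _).congr_of_eventuallyEq hrep

end Holomorphic

section Wirtinger

variable {n : ℕ} {f h : Cn n → ℂ} {z : Cn n} {j : Fin n}

theorem Filter.EventuallyEq.wder_eq (hfh : f =ᶠ[𝓝 z] h) : wder j f z = wder j h z := by
  rw [wder, wder, hfh.fderiv_eq]

theorem HasDerivAt.wder_comp {c : ℂ → ℂ} {c' : ℂ} (hc : HasDerivAt c c' (f z))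
    (hf : DifferentiableAt ℝ f z) : wder j (fun w => c (f w)) z = c' * wder j f z := by
  have hcf : HasFDerivAt (fun w => c (f w)) _ z :=
    (hc.hasFDerivAt.restrictScalars ℝ).comp z hf.hasFDerivAt
  rw [wder, wder, hcf.fderiv]
  simp only [ContinuousLinearMap.comp_apply, ContinuousLinearMap.coe_restrictScalars',
    ContinuousLinearMap.toSpanSingleton_apply, smul_eq_mul]
  ring

theorem HasDerivAt.wbar_comp {c : ℂ → ℂ} {c' : ℂ} (hc : HasDerivAt c c' (f z))
    (hf : DifferentiableAt ℝ f z) : wbar j (fun w => c (f w)) z = c' * wbar j f z := by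
  have hcf : HasFDerivAt (fun w => c (f w)) _ z :=
    (hc.hasFDerivAt.restrictScalars ℝ).comp z hf.hasFDerivAt
  rw [wbar, wbar, hcf.fderiv]
  simp only [ContinuousLinearMap.comp_apply, ContinuousLinearMap.coe_restrictScalars',
    ContinuousLinearMap.toSpanSingleton_apply, smul_eq_mul]
  ring

theorem wder_add (hf : DifferentiableAt ℝ f z) (hh : DifferentiableAt ℝ h z) :
    wder j (fun w => f w + h w) z = wder j f z + wder j h z := by
  rw [wder, wder, wder, fderiv_fun_add hf hh]
  simp only [add_apply]
  ring

theorem wbar_add (hf : DifferentiableAt ℝ f z) (hh : DifferentiableAt ℝ h z) :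
    wbar j (fun w => f w + h w) z = wbar j f z + wbar j h z := by
  rw [wbar, wbar, wbar, fderiv_fun_add hf hh]
  simp only [add_apply]
  ring

theorem wder_mul (hf : DifferentiableAt ℝ f z) (hh : DifferentiableAt ℝ h z) :
    wder j (fun w => f w * h w) z = f z * wder j h z + h z * wder j f z := by
  rw [wder, wder, wder, fderiv_fun_mul hf hh]
  simp only [add_apply, smul_apply, smul_eq_mul]
  ring

theorem wbar_mul (hf : DifferentiableAt ℝ f z) (hh : DifferentiableAt ℝ h z) :
    wbar j (fun w => f w * h w) z = f z * wbar j h z + h z * wbar j f z := by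
  rw [wbar, wbar, wbar, fderiv_fun_mul hf hh]
  simp only [add_apply, smul_apply, smul_eq_mul]
  ring

theorem wder_inv_mul (hf : DifferentiableAt ℝ f z) (hh : DifferentiableAt ℝ h z) (hfz : f z ≠ 0) :
    wder j (fun w => (f w)⁻¹ * h w) z = (f z)⁻¹ * wder j h z - (f z ^ 2)⁻¹ * h z * wder j f z := by
  have hinv : DifferentiableAt ℝ (fun w => (f w)⁻¹) z := hf.inv hfz
  rw [wder_mul hinv hh, (hasDerivAt_inv hfz).wder_comp hf]
  ring

theorem wder_conj (hf : DifferentiableAt ℝ f z) :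
    wder j (fun w => conj (f w)) z = conj (wbar j f z) := by
  have hcf : HasFDerivAt (fun w => conj (f w)) _ z := conjCLE.hasFDerivAt.comp z hf.hasFDerivAt
  rw [wder, wbar, hcf.fderiv]
  simp [map_div₀, map_ofNat, sub_eq_add_neg]

theorem wbar_conj (hf : DifferentiableAt ℝ f z) :
    wbar j (fun w => conj (f w)) z = conj (wder j f z) := by
  have hcf : HasFDerivAt (fun w => conj (f w)) _ z := conjCLE.hasFDerivAt.comp z hf.hasFDerivAt
  rw [wder, wbar, hcf.fderiv]
  simp [map_div₀, map_ofNat, sub_eq_add_neg]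

theorem DifferentiableAt.wder_eq_fderiv (hf : DifferentiableAt ℂ f z) :
    wder j f z = fderiv ℂ f z (sdir j) := by
  rw [wder, hf.fderiv_restrictScalars ℝ, ContinuousLinearMap.coe_restrictScalars',
    (fderiv ℂ f z).map_smul, smul_eq_mul]
  linear_combination (-fderiv ℂ f z (sdir j) / 2) * I_mul_I

theorem DifferentiableAt.wbar_eq_zero (hf : DifferentiableAt ℂ f z) : wbar j f z = 0 := by
  rw [wbar, hf.fderiv_restrictScalars ℝ, ContinuousLinearMap.coe_restrictScalars',
    (fderiv ℂ f z).map_smul, smul_eq_mul]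
  linear_combination (fderiv ℂ f z (sdir j) / 2) * I_mul_I

end Wirtinger

theorem DifferentiableAt.conj {E : Type*} [NormedAddCommGroup E] [NormedSpace ℝ E] {f : E → ℂ}
    {z : E} (hf : DifferentiableAt ℝ f z) : DifferentiableAt ℝ (fun w => conj (f w)) z :=
  hf.star

section HolomorphicProducts

variable {n : ℕ} {f₁ f₂ h₁ h₂ : Cn n → ℂ} {z : Cn n} {j : Fin n}

theorem DifferentiableAt.mul_conj (hf : DifferentiableAt ℂ f₁ z) (hh : DifferentiableAt ℂ h₁ z) :
    DifferentiableAt ℝ (fun w => f₁ w * conj (h₁ w)) z :=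
  (hf.restrictScalars ℝ).mul (hh.restrictScalars ℝ).conj

theorem DifferentiableAt.mul_conj_add_mul_conj (hf₁ : DifferentiableAt ℂ f₁ z)
    (hh₁ : DifferentiableAt ℂ h₁ z) (hf₂ : DifferentiableAt ℂ f₂ z)
    (hh₂ : DifferentiableAt ℂ h₂ z) :
    DifferentiableAt ℝ (fun w => f₁ w * conj (h₁ w) + f₂ w * conj (h₂ w)) z :=
  (hf₁.mul_conj hh₁).add (hf₂.mul_conj hh₂)

theorem wbar_mul_conj (hf : DifferentiableAt ℂ f₁ z) (hh : DifferentiableAt ℂ h₁ z) :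
    wbar j (fun w => f₁ w * conj (h₁ w)) z = f₁ z * conj (wder j h₁ z) := by
  rw [wbar_mul (hf.restrictScalars ℝ) (hh.restrictScalars ℝ).conj,
    wbar_conj (hh.restrictScalars ℝ), hf.wbar_eq_zero, mul_zero, add_zero]

theorem wder_mul_conj (hf : DifferentiableAt ℂ f₁ z) (hh : DifferentiableAt ℂ h₁ z) :
    wder j (fun w => f₁ w * conj (h₁ w)) z = conj (h₁ z) * wder j f₁ z := by
  rw [wder_mul (hf.restrictScalars ℝ) (hh.restrictScalars ℝ).conj,
    wder_conj (hh.restrictScalars ℝ), hh.wbar_eq_zero, map_zero, mul_zero, zero_add]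

theorem wbar_mul_conj_add_mul_conj (hf₁ : DifferentiableAt ℂ f₁ z)
    (hh₁ : DifferentiableAt ℂ h₁ z) (hf₂ : DifferentiableAt ℂ f₂ z)
    (hh₂ : DifferentiableAt ℂ h₂ z) :
    wbar j (fun w => f₁ w * conj (h₁ w) + f₂ w * conj (h₂ w)) z =
      f₁ z * conj (wder j h₁ z) + f₂ z * conj (wder j h₂ z) := by
  rw [wbar_add (hf₁.mul_conj hh₁) (hf₂.mul_conj hh₂),
    wbar_mul_conj hf₁ hh₁, wbar_mul_conj hf₂ hh₂]

theorem wder_mul_conj_add_mul_conj (hf₁ : DifferentiableAt ℂ f₁ z)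
    (hh₁ : DifferentiableAt ℂ h₁ z) (hf₂ : DifferentiableAt ℂ f₂ z)
    (hh₂ : DifferentiableAt ℂ h₂ z) :
    wder j (fun w => f₁ w * conj (h₁ w) + f₂ w * conj (h₂ w)) z =
      conj (h₁ z) * wder j f₁ z + conj (h₂ z) * wder j f₂ z := by
  rw [wder_add (hf₁.mul_conj hh₁) (hf₂.mul_conj hh₂),
    wder_mul_conj hf₁ hh₁, wder_mul_conj hf₂ hh₂]

theorem DifferentiableOn.differentiableAt_wder {U : Set (Cn n)} (hU : IsOpen U)
    (hf : DifferentiableOn ℂ f₁ U) (hz : z ∈ U) (j : Fin n) :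
    DifferentiableAt ℂ (wder j f₁) z := by
  refine (hf.differentiableAt_fderiv_apply hU hz (sdir j)).congr_of_eventuallyEq ?_
  filter_upwards [hU.mem_nhds hz] with w hw
  exact (hf.differentiableAt (hU.mem_nhds hw)).wder_eq_fderiv

end HolomorphicProducts

section TwoGenerators

variable {n : ℕ} {g₁ g₂ : Cn n → ℂ} {z : Cn n}

theorem ofReal_norm_sq_add_norm_sq (a b : ℂ) :
    ((‖a‖ ^ 2 + ‖b‖ ^ 2 : ℝ) : ℂ) = a * conj a + b * conj b := by
  simp only [mul_conj, normSq_eq_norm_sq]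
  push_cast
  ring

theorem wbar_log_norm_sq_add_norm_sq (h₁ : DifferentiableAt ℂ g₁ z)
    (h₂ : DifferentiableAt ℂ g₂ z) (hpos : 0 < ‖g₁ z‖ ^ 2 + ‖g₂ z‖ ^ 2) (k : Fin n) :
    wbar k (fun w => ((Real.log (‖g₁ w‖ ^ 2 + ‖g₂ w‖ ^ 2) : ℝ) : ℂ)) z =
      (g₁ z * conj (g₁ z) + g₂ z * conj (g₂ z))⁻¹ *
        (g₁ z * conj (wder k g₁ z) + g₂ z * conj (wder k g₂ z)) := by
  have hlog : (fun w => ((Real.log (‖g₁ w‖ ^ 2 + ‖g₂ w‖ ^ 2) : ℝ) : ℂ)) =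
      fun w => log (g₁ w * conj (g₁ w) + g₂ w * conj (g₂ w)) := by
    ext w
    rw [ofReal_log (by positivity), ofReal_norm_sq_add_norm_sq]
  have hslit : g₁ z * conj (g₁ z) + g₂ z * conj (g₂ z) ∈ slitPlane := by
    rw [← ofReal_norm_sq_add_norm_sq]
    exact ofReal_mem_slitPlane.2 hpos
  rw [hlog, (hasDerivAt_log hslit).wbar_comp (h₁.mul_conj_add_mul_conj h₁ h₂ h₂),
    wbar_mul_conj_add_mul_conj h₁ h₁ h₂ h₂]

end TwoGenerators

/-- **The Hessian of `log|g|²` for two generators**.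
For holomorphic `g₁, g₂` with `|g|² = |g₁|² + |g₂|² > 0`:
`∂²log|g|²/∂z_j∂z̄_k = |g|⁻⁴ (g₂∂g₁/∂z_j - g₁∂g₂/∂z_j) ⋅ conj(g₂∂g₁/∂z_k - g₁∂g₂/∂z_k)`. -/
theorem hessian_log_two_generators {n : ℕ} (U : Set (Cn n)) (hU : IsOpen U)
    (g₁ g₂ : Cn n → ℂ)
    (hg₁ : DifferentiableOn ℂ g₁ U) (hg₂ : DifferentiableOn ℂ g₂ U)
    (hpos : ∀ z ∈ U, 0 < ‖g₁ z‖ ^ 2 + ‖g₂ z‖ ^ 2)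
    (z : Cn n) (hz : z ∈ U) (j k : Fin n) :
    hessC j k (fun w => ((Real.log (‖g₁ w‖ ^ 2 + ‖g₂ w‖ ^ 2) : ℝ) : ℂ)) z =
      (((‖g₁ z‖ ^ 2 + ‖g₂ z‖ ^ 2 : ℝ) : ℂ) ^ 2)⁻¹ *
        (g₂ z * wder j g₁ z - g₁ z * wder j g₂ z) *
        (starRingEnd ℂ) (g₂ z * wder k g₁ z - g₁ z * wder k g₂ z) := by
  have hol₁ : ∀ w ∈ U, DifferentiableAt ℂ g₁ w := fun w hw => hg₁.differentiableAt (hU.mem_nhds hw)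
  have hol₂ : ∀ w ∈ U, DifferentiableAt ℂ g₂ w := fun w hw => hg₂.differentiableAt (hU.mem_nhds hw)
  have hinner : (fun w => wbar k (fun x => ((Real.log (‖g₁ x‖ ^ 2 + ‖g₂ x‖ ^ 2) : ℝ) : ℂ)) w)
      =ᶠ[𝓝 z] fun w => (g₁ w * conj (g₁ w) + g₂ w * conj (g₂ w))⁻¹ *
        (g₁ w * conj (wder k g₁ w) + g₂ w * conj (wder k g₂ w)) := by
    filter_upwards [hU.mem_nhds hz] with w hw
    exact wbar_log_norm_sq_add_norm_sq (hol₁ w hw) (hol₂ w hw) (hpos w hw) k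
  have h₁ := hol₁ z hz
  have h₂ := hol₂ z hz
  have hd₁ := hg₁.differentiableAt_wder hU hz k
  have hd₂ := hg₂.differentiableAt_wder hU hz k
  have hN : g₁ z * conj (g₁ z) + g₂ z * conj (g₂ z) ≠ 0 := by
    rw [← ofReal_norm_sq_add_norm_sq]
    exact_mod_cast (hpos z hz).ne'
  rw [hessC, hinner.wder_eq, wder_inv_mul (h₁.mul_conj_add_mul_conj h₁ h₂ h₂)
      (h₁.mul_conj_add_mul_conj hd₁ h₂ hd₂) hN,
    wder_mul_conj_add_mul_conj h₁ h₁ h₂ h₂, wder_mul_conj_add_mul_conj h₁ hd₁ h₂ hd₂,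
    ofReal_norm_sq_add_norm_sq]
  simp only [map_sub, map_mul]
  field_simp
  ring
end
end
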